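/- Let P ∈ ℝ^{n×n} be symmetric positive semidefinite, let H = [[Q, S^⊤],[S, R]] ∈ ℝ^{(n+m)×(n+m)} be symmetric positive semidefinite with blocks Q ∈ ℝ^{n×n}, S ∈ ℝ^{m×n}, R ∈ ℝ^{m×m}, let A ∈ ℝ^{n×n}, B ∈ ℝ^{n×m}, and assume E := R + B^⊤ P B is positive definite. Define K := -E^{-1}(S + B^⊤ P A) and P^- := Q + A^⊤ P A + (S^⊤ + A^⊤ P B) K. Then P^- is symmetric positive semidefinite. -/

import Mathlib

open Matrix

/-- One step of the backward Riccati recursion preserves positive semidefiniteness: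
if `P ⪰ 0`, `[[Q, Sᵀ],[S, R]] ⪰ 0` and `E = R + Bᵀ P B ≻ 0`, then
`P⁻ = Q + Aᵀ P A + (Sᵀ + Aᵀ P B) K` with `K = -E⁻¹(S + Bᵀ P A)` satisfies `P⁻ ⪰ 0`. -/
theorem riccati_step_posSemidef (n m : ℕ)
    (P : Matrix (Fin n) (Fin n) ℝ) (hP : P.PosSemidef)
    (Q : Matrix (Fin n) (Fin n) ℝ) (S : Matrix (Fin m) (Fin n) ℝ)
    (R : Matrix (Fin m) (Fin m) ℝ)
    (hH : (Matrix.fromBlocks Q Sᵀ S R).PosSemidef)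
    (A : Matrix (Fin n) (Fin n) ℝ) (B : Matrix (Fin n) (Fin m) ℝ)
    (hE : (R + Bᵀ * P * B).PosDef) :
    (Q + Aᵀ * P * A +
      (Sᵀ + Aᵀ * P * B) * (-((R + Bᵀ * P * B)⁻¹ * (S + Bᵀ * P * A)))).PosSemidef := by
  have hPsym : Pᵀ = P := hP.1
  have hconj : (Sᵀ + Aᵀ * P * B)ᴴ = S + Bᵀ * P * A := by
    simp [conjTranspose_add, conjTranspose_mul, Matrix.mul_assoc,
      show Pᴴ = P from hP.1, hPsym]
  -- the congruence term
  have hC : ((fromCols A B)ᴴ * P * fromCols A B).PosSemidef :=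
    hP.conjTranspose_mul_mul_same _
  have hCeq : (fromCols A B)ᴴ * P * fromCols A B =
      fromBlocks (Aᵀ * P * A) (Aᵀ * P * B) (Bᵀ * P * A) (Bᵀ * P * B) := by
    rw [conjTranspose_fromCols_eq_fromRows_conjTranspose, Matrix.mul_assoc,
      mul_fromCols, fromRows_mul_fromCols]
    simp [Matrix.mul_assoc]
  have hM : (fromBlocks (Q + Aᵀ * P * A) (Sᵀ + Aᵀ * P * B)
      (S + Bᵀ * P * A) (R + Bᵀ * P * B)).PosSemidef := by
    have := hH.add hC
    rwa [hCeq, fromBlocks_add] at this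
  haveI : Invertible (R + Bᵀ * P * B) := hE.isUnit.invertible
  have hschur := (Matrix.PosDef.fromBlocks₂₂ (Q + Aᵀ * P * A)
      (Sᵀ + Aᵀ * P * B) hE).mp (by rwa [hconj])
  have : Q + Aᵀ * P * A +
      (Sᵀ + Aᵀ * P * B) * (-((R + Bᵀ * P * B)⁻¹ * (S + Bᵀ * P * A))) =
      Q + Aᵀ * P * A - (Sᵀ + Aᵀ * P * B) * (R + Bᵀ * P * B)⁻¹ *
        (Sᵀ + Aᵀ * P * B)ᴴ := by
    rw [hconj]; simp only [Matrix.mul_neg, sub_eq_add_neg, Matrix.mul_assoc]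
  rw [this]
  exact hschur
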